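/- In the fixed run setting, for all i ≤ n, every normal ⊢eq proof from σ(T_i; E_i) is a typed ⊢eq proof. -/

import Mathlib

open scoped Classical

/-! ## Terms -/

inductive Term : Type
  | name : ℕ → Term
  | var  : ℕ → Term
  | pair : Term → Term → Term
  | enc  : Term → Term → Term
deriving DecidableEq

namespace Term

def subterms : Term → Set Term
  | name n => {name n}
  | var x => {var x}
  | pair a b => insert (pair a b) (subterms a ∪ subterms b)
  | enc a b => insert (enc a b) (subterms a ∪ subterms b)

def tvars : Term → Set ℕ
  | name _ => ∅
  | var x => {x}
  | pair a b => tvars a ∪ tvars b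
  | enc a b => tvars a ∪ tvars b

/-- A term is ground if it contains no variables. -/
def ground (t : Term) : Prop := tvars t = ∅

end Term

def sSubterms (X : Set Term) : Set Term := ⋃ t ∈ X, t.subterms
def sVars (X : Set Term) : Set ℕ := ⋃ t ∈ X, t.tvars
def varTerms (V : Set ℕ) : Set Term := Term.var '' V
def pairSubterms (E : Set (Term × Term)) : Set Term :=
  ⋃ e ∈ E, (Term.subterms e.1 ∪ Term.subterms e.2)

/-! ## Substitutions -/

abbrev Subst := ℕ → Term

namespace Subst

def app (σ : Subst) : Term → Term
  | Term.name n => Term.name n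
  | Term.var x => σ x
  | Term.pair a b => Term.pair (app σ a) (app σ b)
  | Term.enc a b => Term.enc (app σ a) (app σ b)

def dom (σ : Subst) : Set ℕ := {x | σ x ≠ Term.var x}

/-- A (totally) ground substitution. -/
def isGround (σ : Subst) : Prop := ∀ x, (σ x).ground

end Subst

def pairImg (σ : Subst) (E : Set (Term × Term)) : Set (Term × Term) :=
  (fun e => (σ.app e.1, σ.app e.2)) '' E

/-! ## Dolev-Yao derivability.  `inv` gives the inverse of a key. -/

inductive dy (inv : Term → Term) (X : Set Term) : Term → Prop
  | ax {t} : t ∈ X → dy inv X t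
  | pair {t u} : dy inv X t → dy inv X u → dy inv X (Term.pair t u)
  | enc {t k} : dy inv X t → dy inv X k → dy inv X (Term.enc t k)
  | fst {t u} : dy inv X (Term.pair t u) → dy inv X t
  | snd {t u} : dy inv X (Term.pair t u) → dy inv X u
  | dec {t k} : dy inv X (Term.enc t k) → dy inv X (inv k) → dy inv X t

/-! ## Positions -/

def positions : Term → Set (List Bool)
  | Term.pair a b =>
      insert [] ((List.cons false) '' positions a ∪ (List.cons true) '' positions b)
  | Term.enc a b =>
      insert [] ((List.cons false) '' positions a ∪ (List.cons true) '' positions b)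
  | _ => {[]}

def subtermAt : Term → List Bool → Option Term
  | t, [] => some t
  | Term.pair a b, i :: p => subtermAt (if i then b else a) p
  | Term.enc a b, i :: p => subtermAt (if i then b else a) p
  | _, _ :: _ => none

/-- Positions of `t` at which the variable `x` occurs. -/
def posof (x : ℕ) (t : Term) : Set (List Bool) := {p | subtermAt t p = some (Term.var x)}

/-- Replace the subterms at every position in `P` by `r`. -/
noncomputable def replaceAt : Term → Set (List Bool) → Term → Term
  | Term.pair a b, P, r =>
      if [] ∈ P then r
      else Term.pair (replaceAt a {p | false :: p ∈ P} r) (replaceAt b {p | true :: p ∈ P} r)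
  | Term.enc a b, P, r =>
      if [] ∈ P then r
      else Term.enc (replaceAt a {p | false :: p ∈ P} r) (replaceAt b {p | true :: p ∈ P} r)
  | t, P, r => if [] ∈ P then r else t

/-- `Qpos t p`: the root position together with all positions `q ++ [i]` of `t`
where `q` is a proper prefix of `p`. -/
def Qpos (t : Term) (p : List Bool) : Set (List Bool) :=
  insert [] {q | q ∈ positions t ∧ ∃ q' i, q = q' ++ [i] ∧ q' <+: p ∧ q' ≠ p}

/-- Abstractable positions of `t` with respect to `S`. -/
def absPos (inv : Term → Term) (S : Set Term) (t : Term) : Set (List Bool) :=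
  {p | p ∈ positions t ∧ ∀ q ∈ Qpos t p, ∀ s, subtermAt t q = some s → dy inv S s}

/-! ## Assertions: `∃ bv. (l ⋈ r)` -/

structure Assertion : Type where
  bv : List ℕ
  l : Term
  r : Term
deriving DecidableEq

namespace Assertion

def bvSet (α : Assertion) : Set ℕ := {x | x ∈ α.bv}
def fv (α : Assertion) : Set ℕ := (α.l.tvars ∪ α.r.tvars) \ α.bvSet
def vars (α : Assertion) : Set ℕ := α.l.tvars ∪ α.r.tvars ∪ α.bvSet
def subterms (α : Assertion) : Set Term := α.l.subterms ∪ α.r.subterms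

end Assertion

def afvSet (A : Set Assertion) : Set ℕ := ⋃ β ∈ A, β.fv
def abvSet (A : Set Assertion) : Set ℕ := ⋃ β ∈ A, β.bvSet
def aVarsSet (A : Set Assertion) : Set ℕ := ⋃ β ∈ A, β.vars
def aSubtermsSet (A : Set Assertion) : Set Term := ⋃ β ∈ A, β.subterms

/-- The public terms of an assertion: maximal subterms containing no quantifiable
variable (`Vq` is the set of quantifiable variables). -/
def pubs (Vq : Set ℕ) (α : Assertion) : Set Term :=
  {t | t ∈ α.subterms ∧ t.tvars ∩ Vq = ∅ ∧
    ¬ ∃ u ∈ α.subterms, t ≠ u ∧ t ∈ u.subterms ∧ u.tvars ∩ Vq = ∅}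

/-- prepend an existential quantifier -/
def exA (x : ℕ) (α : Assertion) : Assertion := ⟨x :: α.bv, α.l, α.r⟩

/-- The `0^k` prefix of term positions of an assertion. -/
def prefixL (α : Assertion) : List Bool := List.replicate α.bv.length false

/-- Positions of an assertion at which the variable `x` occurs. -/
def aPosOf (x : ℕ) (α : Assertion) : Set (List Bool) :=
  (fun p => prefixL α ++ false :: p) '' posof x α.l ∪
  (fun p => prefixL α ++ true :: p) '' posof x α.r

/-- Replace the subterms at every (assertion) position in `P` by `r`. -/
noncomputable def aReplace (α : Assertion) (P : Set (List Bool)) (r : Term) : Assertion :=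
  ⟨α.bv,
   replaceAt α.l {p | (prefixL α ++ false :: p) ∈ P} r,
   replaceAt α.r {p | (prefixL α ++ true :: p) ∈ P} r⟩

/-- Abstractable positions of an assertion with respect to `S`. -/
def aAbs (inv : Term → Term) (S : Set Term) (α : Assertion) : Set (List Bool) :=
  (fun p => prefixL α ++ false :: p) '' absPos inv (S ∪ varTerms α.bvSet) α.l ∪
  (fun p => prefixL α ++ true :: p) '' absPos inv (S ∪ varTerms α.bvSet) α.r

/-! ## The assertion derivation system ⊢a -/

inductive adrv (inv : Term → Term) : Set Term → Set Assertion → Assertion → Prop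
  | ax {S A α} : α ∈ A → adrv inv S A α
  | eq {S A t} : dy inv S t → adrv inv S A ⟨[], t, t⟩
  | sym {S A t u} : adrv inv S A ⟨[], t, u⟩ → adrv inv S A ⟨[], u, t⟩
  | trans {S A t u v} : adrv inv S A ⟨[], t, u⟩ → adrv inv S A ⟨[], u, v⟩ →
      adrv inv S A ⟨[], t, v⟩
  | consPair {S A t0 t1 u0 u1} : adrv inv S A ⟨[], t0, u0⟩ → adrv inv S A ⟨[], t1, u1⟩ →
      adrv inv S A ⟨[], Term.pair t0 t1, Term.pair u0 u1⟩
  | consEnc {S A t0 t1 u0 u1} : adrv inv S A ⟨[], t0, u0⟩ → adrv inv S A ⟨[], t1, u1⟩ →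
      adrv inv S A ⟨[], Term.enc t0 t1, Term.enc u0 u1⟩
  | projPairFst {S A t0 t1 u0 u1} :
      adrv inv S A ⟨[], Term.pair t0 t1, Term.pair u0 u1⟩ →
      dy inv S t0 → dy inv S t1 → dy inv S u0 → dy inv S u1 → adrv inv S A ⟨[], t0, u0⟩
  | projPairSnd {S A t0 t1 u0 u1} :
      adrv inv S A ⟨[], Term.pair t0 t1, Term.pair u0 u1⟩ →
      dy inv S t0 → dy inv S t1 → dy inv S u0 → dy inv S u1 → adrv inv S A ⟨[], t1, u1⟩
  | projEncFst {S A t0 t1 u0 u1} :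
      adrv inv S A ⟨[], Term.enc t0 t1, Term.enc u0 u1⟩ →
      dy inv S t0 → dy inv S t1 → dy inv S u0 → dy inv S u1 → adrv inv S A ⟨[], t0, u0⟩
  | projEncSnd {S A t0 t1 u0 u1} :
      adrv inv S A ⟨[], Term.enc t0 t1, Term.enc u0 u1⟩ →
      dy inv S t0 → dy inv S t1 → dy inv S u0 → dy inv S u1 → adrv inv S A ⟨[], t1, u1⟩
  | exI {S A α x t} : adrv inv S A (aReplace α (aPosOf x α) t) → dy inv S t →
      aPosOf x α ⊆ aAbs inv (insert (Term.var x) S) α → adrv inv S A (exA x α)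
  | exE {S A α x γ} : adrv inv S A (exA x α) →
      adrv inv (insert (Term.var x) S) (insert α A) γ →
      x ∉ sVars S → x ∉ afvSet A → x ∉ γ.fv → adrv inv S A γ

/-- ⊢a without the ∃-elimination rule. -/
inductive adrvNX (inv : Term → Term) : Set Term → Set Assertion → Assertion → Prop
  | ax {S A α} : α ∈ A → adrvNX inv S A α
  | eq {S A t} : dy inv S t → adrvNX inv S A ⟨[], t, t⟩
  | sym {S A t u} : adrvNX inv S A ⟨[], t, u⟩ → adrvNX inv S A ⟨[], u, t⟩
  | trans {S A t u v} : adrvNX inv S A ⟨[], t, u⟩ → adrvNX inv S A ⟨[], u, v⟩ →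
      adrvNX inv S A ⟨[], t, v⟩
  | consPair {S A t0 t1 u0 u1} : adrvNX inv S A ⟨[], t0, u0⟩ → adrvNX inv S A ⟨[], t1, u1⟩ →
      adrvNX inv S A ⟨[], Term.pair t0 t1, Term.pair u0 u1⟩
  | consEnc {S A t0 t1 u0 u1} : adrvNX inv S A ⟨[], t0, u0⟩ → adrvNX inv S A ⟨[], t1, u1⟩ →
      adrvNX inv S A ⟨[], Term.enc t0 t1, Term.enc u0 u1⟩
  | projPairFst {S A t0 t1 u0 u1} :
      adrvNX inv S A ⟨[], Term.pair t0 t1, Term.pair u0 u1⟩ →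
      dy inv S t0 → dy inv S t1 → dy inv S u0 → dy inv S u1 → adrvNX inv S A ⟨[], t0, u0⟩
  | projPairSnd {S A t0 t1 u0 u1} :
      adrvNX inv S A ⟨[], Term.pair t0 t1, Term.pair u0 u1⟩ →
      dy inv S t0 → dy inv S t1 → dy inv S u0 → dy inv S u1 → adrvNX inv S A ⟨[], t1, u1⟩
  | projEncFst {S A t0 t1 u0 u1} :
      adrvNX inv S A ⟨[], Term.enc t0 t1, Term.enc u0 u1⟩ →
      dy inv S t0 → dy inv S t1 → dy inv S u0 → dy inv S u1 → adrvNX inv S A ⟨[], t0, u0⟩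
  | projEncSnd {S A t0 t1 u0 u1} :
      adrvNX inv S A ⟨[], Term.enc t0 t1, Term.enc u0 u1⟩ →
      dy inv S t0 → dy inv S t1 → dy inv S u0 → dy inv S u1 → adrvNX inv S A ⟨[], t1, u1⟩
  | exI {S A α x t} : adrvNX inv S A (aReplace α (aPosOf x α) t) → dy inv S t →
      aPosOf x α ⊆ aAbs inv (insert (Term.var x) S) α → adrvNX inv S A (exA x α)

/-- The equality fragment ⊢eq : derivability of equalities `t ⋈ u` from a set `T` of
terms and a set `E` of equalities, without the quantifier rules. -/
inductive eqdrv (inv : Term → Term) (T : Set Term) (E : Set (Term × Term)) :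
    Term → Term → Prop
  | ax {t u} : (t, u) ∈ E → eqdrv inv T E t u
  | eq {t} : dy inv T t → eqdrv inv T E t t
  | sym {t u} : eqdrv inv T E t u → eqdrv inv T E u t
  | trans {t u v} : eqdrv inv T E t u → eqdrv inv T E u v → eqdrv inv T E t v
  | consPair {t0 t1 u0 u1} : eqdrv inv T E t0 u0 → eqdrv inv T E t1 u1 →
      eqdrv inv T E (Term.pair t0 t1) (Term.pair u0 u1)
  | consEnc {t0 t1 u0 u1} : eqdrv inv T E t0 u0 → eqdrv inv T E t1 u1 →
      eqdrv inv T E (Term.enc t0 t1) (Term.enc u0 u1)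
  | projPairFst {t0 t1 u0 u1} : eqdrv inv T E (Term.pair t0 t1) (Term.pair u0 u1) →
      dy inv T t0 → dy inv T t1 → dy inv T u0 → dy inv T u1 → eqdrv inv T E t0 u0
  | projPairSnd {t0 t1 u0 u1} : eqdrv inv T E (Term.pair t0 t1) (Term.pair u0 u1) →
      dy inv T t0 → dy inv T t1 → dy inv T u0 → dy inv T u1 → eqdrv inv T E t1 u1
  | projEncFst {t0 t1 u0 u1} : eqdrv inv T E (Term.enc t0 t1) (Term.enc u0 u1) →
      dy inv T t0 → dy inv T t1 → dy inv T u0 → dy inv T u1 → eqdrv inv T E t0 u0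
  | projEncSnd {t0 t1 u0 u1} : eqdrv inv T E (Term.enc t0 t1) (Term.enc u0 u1) →
      dy inv T t0 → dy inv T t1 → dy inv T u0 → dy inv T u1 → eqdrv inv T E t1 u1

/-! ## Sanitized pairs, kernels, purity, consistency -/

/-- `(S;A)` is sanitized: free variables avoid `Vq`, bound variables are from `Vq`,
and the public terms of each assertion of `A` belong to `S`. -/
def sanitized (Vq : Set ℕ) (S : Set Term) (A : Set Assertion) : Prop :=
  ((sVars S ∪ afvSet A) ∩ Vq = ∅) ∧ (∀ β ∈ A, β.bvSet ⊆ Vq) ∧ (∀ β ∈ A, pubs Vq β ⊆ S)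

def kerT (S : Set Term) (A : Set Assertion) : Set Term := S ∪ varTerms (abvSet A)
def kerE (A : Set Assertion) : Set (Term × Term) := {e | ∃ β ∈ A, e = (β.l, β.r)}
def kerA (A : Set Assertion) : Set Assertion := {γ | ∃ β ∈ A, γ = Assertion.mk [] β.l β.r}

/-- The set of assertions corresponding to a set of equalities. -/
def EtoA (E : Set (Term × Term)) : Set Assertion := {γ | ∃ e ∈ E, γ = Assertion.mk [] e.1 e.2}

/-- `(T;E)` is pure if it is the kernel of some sanitized pair. -/
def isPure (Vq : Set ℕ) (T : Set Term) (E : Set (Term × Term)) : Prop :=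
  ∃ S A, sanitized Vq S A ∧ T = kerT S A ∧ E = kerE A

/-- `(T;E)` is consistent if some ground substitution unifies every equality in `E`. -/
def consistentE (E : Set (Term × Term)) : Prop :=
  ∃ lam : Subst, lam.isGround ∧ ∀ e ∈ E, lam.app e.1 = lam.app e.2

/-- `M`-bounded substitution: every image has at most `M` distinct subterms. -/
def boundedSub (M : ℕ) (μ : Subst) : Prop :=
  ∀ x ∈ μ.dom, (Term.subterms (μ x)).ncard ≤ M



/-! ## Dolev-Yao proof trees -/

inductive DPT : Type
  | ax (t : Term)
  | pair (p q : DPT)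
  | enc (p q : DPT)
  | fst (p : DPT)
  | snd (p : DPT)
  | dec (p q : DPT)

namespace DPT

/-- The conclusion of a DY proof tree, if it is well-formed. -/
def concl (inv : Term → Term) : DPT → Option Term
  | ax t => some t
  | pair p q =>
      match concl inv p, concl inv q with
      | some a, some b => some (Term.pair a b)
      | _, _ => none
  | enc p q =>
      match concl inv p, concl inv q with
      | some a, some b => some (Term.enc a b)
      | _, _ => none
  | fst p =>
      match concl inv p with
      | some (Term.pair a _) => some a
      | _ => none
  | snd p =>
      match concl inv p with
      | some (Term.pair _ b) => some b
      | _ => none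
  | dec p q =>
      match concl inv p, concl inv q with
      | some (Term.enc a k), some k' => if k' = inv k then some a else none
      | _, _ => none

/-- Validity of a DY proof tree from the set `X`. -/
def valid (inv : Term → Term) (X : Set Term) : DPT → Prop
  | ax t => t ∈ X
  | pair p q => valid inv X p ∧ valid inv X q
  | enc p q => valid inv X p ∧ valid inv X q
  | fst p => valid inv X p ∧ ∃ a b, concl inv p = some (Term.pair a b)
  | snd p => valid inv X p ∧ ∃ a b, concl inv p = some (Term.pair a b)
  | dec p q => valid inv X p ∧ valid inv X q ∧
      ∃ a k, concl inv p = some (Term.enc a k) ∧ concl inv q = some (inv k)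

def endsConstructor : DPT → Prop
  | pair _ _ => True
  | enc _ _ => True
  | _ => False

def endsDestructor : DPT → Prop
  | fst _ => True
  | snd _ => True
  | dec _ _ => True
  | _ => False

/-- Normal DY proofs: no constructor conclusion is the major premise of a destructor. -/
def normal : DPT → Prop
  | ax _ => True
  | pair p q => normal p ∧ normal q
  | enc p q => normal p ∧ normal q
  | fst p => normal p ∧ ¬ endsConstructor p
  | snd p => normal p ∧ ¬ endsConstructor p
  | dec p q => normal p ∧ normal q ∧ ¬ endsConstructor p

/-- All terms occurring in a DY proof tree (conclusions of subproofs). -/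
def termSet (inv : Term → Term) : DPT → Set Term
  | ax t => {t}
  | pair p q => {a | concl inv (pair p q) = some a} ∪ termSet inv p ∪ termSet inv q
  | enc p q => {a | concl inv (enc p q) = some a} ∪ termSet inv p ∪ termSet inv q
  | fst p => {a | concl inv (fst p) = some a} ∪ termSet inv p
  | snd p => {a | concl inv (snd p) = some a} ∪ termSet inv p
  | dec p q => {a | concl inv (dec p q) = some a} ∪ termSet inv p ∪ termSet inv q

/-- Typed DY proof w.r.t. a set `G`: every subproof ends in a constructor rule or
has its conclusion in `G`. -/
def typed (inv : Term → Term) (G : Set Term) : DPT → Prop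
  | ax t => t ∈ G
  | pair p q => typed inv G p ∧ typed inv G q
  | enc p q => typed inv G p ∧ typed inv G q
  | fst p => typed inv G p ∧ ∀ a, concl inv (fst p) = some a → a ∈ G
  | snd p => typed inv G p ∧ ∀ a, concl inv (snd p) = some a → a ∈ G
  | dec p q => typed inv G p ∧ typed inv G q ∧ ∀ a, concl inv (dec p q) = some a → a ∈ G

end DPT

/-! ## Equality proof trees (the system ⊢eq), with n-ary trans -/

inductive EPT : Type
  | ax (t u : Term)
  | eq (t : Term) (d : DPT)
  | sym (t u : Term) (p : EPT)
  | trans (t u : Term) (ps : List EPT)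
  | consPair (t0 u0 t1 u1 : Term) (p q : EPT)
  | consEnc (t0 u0 t1 u1 : Term) (p q : EPT)
  | projPairFst (t0 t1 u0 u1 : Term) (p : EPT)
  | projPairSnd (t0 t1 u0 u1 : Term) (p : EPT)
  | projEncFst (t0 t1 u0 u1 : Term) (p : EPT)
  | projEncSnd (t0 t1 u0 u1 : Term) (p : EPT)

namespace EPT

/-- The conclusion `t ⋈ u` of an equality proof tree. -/
def concl : EPT → Term × Term
  | ax t u => (t, u)
  | eq t _ => (t, t)
  | sym t u _ => (t, u)
  | trans t u _ => (t, u)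
  | consPair t0 u0 t1 u1 _ _ => (Term.pair t0 t1, Term.pair u0 u1)
  | consEnc t0 u0 t1 u1 _ _ => (Term.enc t0 t1, Term.enc u0 u1)
  | projPairFst t0 _ u0 _ _ => (t0, u0)
  | projPairSnd _ t1 _ u1 _ => (t1, u1)
  | projEncFst t0 _ u0 _ _ => (t0, u0)
  | projEncSnd _ t1 _ u1 _ => (t1, u1)

/-- Immediate subproof relation. -/
inductive Sub : EPT → EPT → Prop
  | sym {t u p} : Sub p (EPT.sym t u p)
  | trans {t u ps p} : p ∈ ps → Sub p (EPT.trans t u ps)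
  | consPairL {t0 u0 t1 u1 p q} : Sub p (EPT.consPair t0 u0 t1 u1 p q)
  | consPairR {t0 u0 t1 u1 p q} : Sub q (EPT.consPair t0 u0 t1 u1 p q)
  | consEncL {t0 u0 t1 u1 p q} : Sub p (EPT.consEnc t0 u0 t1 u1 p q)
  | consEncR {t0 u0 t1 u1 p q} : Sub q (EPT.consEnc t0 u0 t1 u1 p q)
  | projPairFst {t0 t1 u0 u1 p} : Sub p (EPT.projPairFst t0 t1 u0 u1 p)
  | projPairSnd {t0 t1 u0 u1 p} : Sub p (EPT.projPairSnd t0 t1 u0 u1 p)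
  | projEncFst {t0 t1 u0 u1 p} : Sub p (EPT.projEncFst t0 t1 u0 u1 p)
  | projEncSnd {t0 t1 u0 u1 p} : Sub p (EPT.projEncSnd t0 t1 u0 u1 p)

/-- `Subproof p q`: `p` is a (not necessarily proper) subproof of `q`. -/
def Subproof : EPT → EPT → Prop := Relation.ReflTransGen Sub

def isAx : EPT → Prop
  | ax _ _ => True
  | _ => False

def isTrans : EPT → Prop
  | trans _ _ _ => True
  | _ => False

def isCons : EPT → Prop
  | consPair _ _ _ _ _ _ => True
  | consEnc _ _ _ _ _ _ => True
  | _ => False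

def isProj : EPT → Prop
  | projPairFst _ _ _ _ _ => True
  | projPairSnd _ _ _ _ _ => True
  | projEncFst _ _ _ _ _ => True
  | projEncSnd _ _ _ _ _ => True
  | _ => False

/-- The ⊢eq proof contains an occurrence of the cons rule. -/
def containsCons (π : EPT) : Prop := ∃ π', Subproof π' π ∧ isCons π'

/-- Local validity of the last rule of an equality proof tree. -/
def localValid (inv : Term → Term) (T : Set Term) (E : Set (Term × Term)) : EPT → Prop
  | ax t u => (t, u) ∈ E
  | eq t d => DPT.valid inv T d ∧ DPT.concl inv d = some t
  | sym t u p => concl p = (u, t)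
  | trans t u ps =>
      ps ≠ [] ∧ (ps.head?.map fun p => (concl p).1) = some t ∧
      (ps.getLast?.map fun p => (concl p).2) = some u ∧
      List.Chain' (fun p q => (concl p).2 = (concl q).1) ps
  | consPair t0 u0 t1 u1 p q => concl p = (t0, u0) ∧ concl q = (t1, u1)
  | consEnc t0 u0 t1 u1 p q => concl p = (t0, u0) ∧ concl q = (t1, u1)
  | projPairFst t0 t1 u0 u1 p => concl p = (Term.pair t0 t1, Term.pair u0 u1) ∧
      dy inv T t0 ∧ dy inv T t1 ∧ dy inv T u0 ∧ dy inv T u1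
  | projPairSnd t0 t1 u0 u1 p => concl p = (Term.pair t0 t1, Term.pair u0 u1) ∧
      dy inv T t0 ∧ dy inv T t1 ∧ dy inv T u0 ∧ dy inv T u1
  | projEncFst t0 t1 u0 u1 p => concl p = (Term.enc t0 t1, Term.enc u0 u1) ∧
      dy inv T t0 ∧ dy inv T t1 ∧ dy inv T u0 ∧ dy inv T u1
  | projEncSnd t0 t1 u0 u1 p => concl p = (Term.enc t0 t1, Term.enc u0 u1) ∧
      dy inv T t0 ∧ dy inv T t1 ∧ dy inv T u0 ∧ dy inv T u1

/-- Validity of an equality proof tree from `(T;E)`. -/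
def valid (inv : Term → Term) (T : Set Term) (E : Set (Term × Term)) (π : EPT) : Prop :=
  ∀ π', Subproof π' π → localValid inv T E π'

/-- Local normality conditions for the last rule. -/
def localNormal : EPT → Prop
  | ax _ _ => True
  | eq _ d => DPT.normal d ∧ DPT.endsDestructor d
  | sym _ _ p => isAx p
  | trans _ _ ps =>
      (∀ p ∈ ps, ¬ isTrans p ∧ (concl p).1 ≠ (concl p).2) ∧
      List.Chain' (fun p q => ¬ (isCons p ∧ isCons q)) ps
  | consPair _ _ _ _ _ _ => True
  | consEnc _ _ _ _ _ _ => True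
  | projPairFst _ _ _ _ p => ¬ containsCons p
  | projPairSnd _ _ _ _ p => ¬ containsCons p
  | projEncFst _ _ _ _ p => ¬ containsCons p
  | projEncSnd _ _ _ _ p => ¬ containsCons p

/-- A normal ⊢eq proof. -/
def normalP (π : EPT) : Prop := ∀ π', Subproof π' π → localNormal π'

/-- The DY subproof attached to an `eq` node, if any. -/
def dSub : EPT → Option DPT
  | eq _ d => some d
  | _ => none

/-- All terms occurring in an ⊢eq proof: the terms of the conclusions of all
subproofs, including the DY subproofs. -/
def termSet (inv : Term → Term) (π : EPT) : Set Term :=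
  {a | ∃ π', Subproof π' π ∧
    (a = (concl π').1 ∨ a = (concl π').2 ∨
      ∃ d, dSub π' = some d ∧ a ∈ DPT.termSet inv d)}

/-- Typed ⊢eq proof w.r.t. a set `Typ` of typed terms: every subproof contains
cons, or proves a trivial equality, or has typed conclusion terms. -/
def typedP (Typ : Set Term) (π : EPT) : Prop :=
  ∀ π', Subproof π' π →
    containsCons π' ∨ (concl π').1 = (concl π').2 ∨
      ((concl π').1 ∈ Typ ∧ (concl π').2 ∈ Typ)

end EPT



/-! ## The fixed run setting -/

/-- A fixed run of a protocol: at step `i` (for `1 ≤ i ≤ n`) the honest agent `uᵢ`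
receives the assertion `β i` from the intruder and sends the assertion `α i`;
`(T i; E i)` and `(U i; F i)` are the kernels of the knowledge states of the
intruder and of `uᵢ`; `σ` is the ground substitution of the run, `μ i`/`θ i` the
witness substitutions, `ω` their composition, and `m` the spare name. -/
structure RunSetting : Type where
  inv : Term → Term
  Vq : Set ℕ
  n : ℕ
  β : ℕ → Assertion
  α : ℕ → Assertion
  T : ℕ → Set Term
  E : ℕ → Set (Term × Term)
  U : ℕ → Set Term
  F : ℕ → Set (Term × Term)
  σ : Subst
  μ : ℕ → Subst
  θ : ℕ → Subst
  ω : Subst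
  m : ℕ
  -- well-formedness of the communicated assertions
  hβbv : ∀ i, 1 ≤ i → i ≤ n → (β i).bvSet ⊆ Vq
  hαbv : ∀ i, 1 ≤ i → i ≤ n → (α i).bvSet ⊆ Vq
  hβfv : ∀ i, 1 ≤ i → i ≤ n → (β i).fv ∩ Vq = ∅
  hαfv : ∀ i, 1 ≤ i → i ≤ n → (α i).fv ∩ Vq = ∅
  -- σ is ground, defined on the intruder variables of the run, and fixes Vq
  hσVq : ∀ x ∈ Vq, σ x = Term.var x
  hσground : ∀ x ∈ σ.dom, (σ x).ground
  -- evolution of the kernels of the intruder's knowledge state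
  hT0 : ∀ t ∈ T 0, t.ground
  hE0 : E 0 = ∅
  hTmono : ∀ i, T i ⊆ T (i + 1)
  hEmono : ∀ i, E i ⊆ E (i + 1)
  hTstep : ∀ i, 1 ≤ i → i ≤ n →
    T i = T (i - 1) ∪ pubs Vq (α i) ∪ varTerms (α i).bvSet
  hEstep : ∀ i, 1 ≤ i → i ≤ n → E i = E (i - 1) ∪ {((α i).l, (α i).r)}
  -- knowledge states are finite
  hTfin : ∀ i, i ≤ n → (T i).Finite
  hEfin : ∀ i, i ≤ n → (E i).Finite
  hUfin : ∀ i, i ≤ n → (U i).Finite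
  hFfin : ∀ i, i ≤ n → (F i).Finite
  -- provenance of honest agents' kernels
  hUmem : ∀ i, 1 ≤ i → i ≤ n → ∀ t ∈ U i,
    (∃ x ∈ Vq, t = Term.var x) ∨ t.tvars ⊆ σ.dom
  hFmem : ∀ i, 1 ≤ i → i ≤ n → ∀ e ∈ F i,
    ∃ j, 1 ≤ j ∧ j ≤ i ∧ e = ((β j).l, (β j).r)
  -- variables sent by honest agents were received earlier (Observation 2 of the paper)
  hfvEarlier : ∀ i, 1 ≤ i → i ≤ n → ∀ x ∈ (α i).fv,
    ∃ j, 1 ≤ j ∧ j ≤ i ∧ x ∈ (β j).fv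
  -- witness substitutions and the derivability conditions of the run
  hμdom : ∀ i, 1 ≤ i → i ≤ n → (μ i).dom ⊆ (β i).bvSet
  hθdom : ∀ i, 1 ≤ i → i ≤ n → (θ i).dom ⊆ (α i).bvSet
  hμdy : ∀ i, 1 ≤ i → i ≤ n → ∀ x ∈ (μ i).dom,
    dy inv (Subst.app σ '' T (i - 1)) (μ i x)
  hμeq : ∀ i, 1 ≤ i → i ≤ n →
    eqdrv inv (Subst.app σ '' T (i - 1)) (pairImg σ (E (i - 1)))
      (σ.app ((μ i).app (β i).l)) (σ.app ((μ i).app (β i).r))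
  hθdy : ∀ i, 1 ≤ i → i ≤ n → ∀ x ∈ (θ i).dom,
    dy inv (Subst.app σ '' U i) (θ i x)
  hθeq : ∀ i, 1 ≤ i → i ≤ n →
    eqdrv inv (Subst.app σ '' U i) (pairImg σ (F i))
      (σ.app ((θ i).app (α i).l)) (σ.app ((θ i).app (α i).r))
  -- ω is the composition σμ₁θ₁…μₙθₙ
  hωσ : ∀ x, ω.app (σ x) = ω x
  hωμ : ∀ i, 1 ≤ i → i ≤ n → ∀ x, ω.app ((μ i) x) = ω x
  hωθ : ∀ i, 1 ≤ i → i ≤ n → ∀ x, ω.app ((θ i) x) = ω x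
  hωground : ∀ x ∈ ω.dom, (ω x).ground
  hωT : ∀ i, i ≤ n → ∀ t ∈ T i ∪ U i, (ω.app t).ground
  hωE : ∀ i, i ≤ n → ∀ e ∈ E i ∪ F i, (ω.app e.1).ground ∧ (ω.app e.2).ground
  -- the spare name m
  hm : Term.name m ∈ T 0
  hmβ : ∀ i, 1 ≤ i → i ≤ n →
    Term.name m ∉ (β i).subterms ∪ (α i).subterms
  hmμ : ∀ i, 1 ≤ i → i ≤ n → ∀ x ∈ (μ i).dom, Term.name m ∉ (μ i x).subterms
  hmθ : ∀ i, 1 ≤ i → i ≤ n → ∀ x ∈ (θ i).dom, Term.name m ∉ (θ i x).subterms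

namespace RunSetting

variable (R : RunSetting)

/-- The public terms of the `i`-th intruder send. -/
def IT (i : ℕ) : Set Term := pubs R.Vq (R.β i)

/-- The public terms of the `i`-th honest agent send. -/
def HT (i : ℕ) : Set Term := pubs R.Vq (R.α i)

/-- The type set 𝒞 of the run. -/
def C : Set Term :=
  ⋃ i ∈ Set.Iic R.n, (sSubterms (R.T i ∪ R.U i) ∪ pairSubterms (R.E i ∪ R.F i))

/-- The type set 𝒟 = 𝒞 ∖ 𝒱 of the run. -/
def D : Set Term := R.C \ Set.range Term.var

/-- A variable is minimal if its ω-image coincides with the ω-image of no term of 𝒟. -/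
def minimal (x : ℕ) : Prop := x ∈ R.ω.dom ∧ ¬ ∃ t ∈ R.D, R.ω.app t = R.ω x

/-- A term is zappable if it ω-unifies with some minimal variable. -/
def zappable (t : Term) : Prop := ∃ x, R.minimal x ∧ R.ω.app t = R.ω x

/-- The zap of a term: zappable terms get replaced by the spare name `m`. -/
noncomputable def zap : Term → Term
  | Term.var x => Term.var x
  | Term.name k => if R.zappable (Term.name k) then Term.name R.m else Term.name k
  | Term.pair a b =>
      if R.zappable (Term.pair a b) then Term.name R.m
      else Term.pair (zap a) (zap b)
  | Term.enc a b =>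
      if R.zappable (Term.enc a b) then Term.name R.m
      else Term.enc (zap a) (zap b)

/-- The small substitution λ* corresponding to λ. -/
noncomputable def star (lam : Subst) : Subst := fun x => R.zap (lam x)

/-- The set of typed terms: σ(𝒟) ∪ ω(𝒞) ∪ 𝒱_q. -/
def typedSet : Set Term :=
  Subst.app R.σ '' R.D ∪ Subst.app R.ω '' R.C ∪ varTerms R.Vq

/-- A typed term. -/
def typedTerm (t : Term) : Prop := t ∈ R.typedSet

end RunSetting


/-!
Induction over the cons-free subproofs of a normal proof, carrying along that both sides of each
conclusion have the same `ω`-image: `ω` unifies every equality of the run, since each one was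
derived from earlier ones that it unifies. An axiom is the `σ`-image of a kernel equality, whose
sides lie in `𝒞` and have their variables in `Vq ∪ dom σ`, so it is typed. The premises of a
normal `trans` are non-trivial, hence typed, and so are its endpoints. The premise of a projection
is cons-free, so it is trivial or has typed composite sides, whose arguments are ground or
`σ`/`ω`-images of terms of `𝒞`. The projected terms are derivable from `σ(Tᵢ)`, so their variables
lie in `Vq`; a non-ground one is then typed, and a ground one is the `ω`-image of its `ω`-equal
partner, hence lies in `ω(𝒞)`.
-/

namespace Term

@[simp] lemma mem_subterms_self (t : Term) : t ∈ t.subterms := by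
  cases t <;> simp [subterms]

lemma subterms_subset_of_mem {s t : Term} (h : s ∈ t.subterms) : s.subterms ⊆ t.subterms := by
  induction t with
  | name | var => simp only [subterms, Set.mem_singleton_iff] at h; rw [h]
  | pair a b iha ihb | enc a b iha ihb =>
    simp only [subterms, Set.mem_insert_iff, Set.mem_union] at h
    rcases h with rfl | h | h
    · rfl
    · exact (iha h).trans fun z hz => by simp [subterms, hz]
    · exact (ihb h).trans fun z hz => by simp [subterms, hz]

lemma tvars_subset_of_mem_subterms {s t : Term} (h : s ∈ t.subterms) : s.tvars ⊆ t.tvars := by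
  induction t with
  | name | var => simp only [subterms, Set.mem_singleton_iff] at h; rw [h]
  | pair a b iha ihb | enc a b iha ihb =>
    simp only [subterms, Set.mem_insert_iff, Set.mem_union] at h
    rcases h with rfl | h | h
    · rfl
    · exact (iha h).trans Set.subset_union_left
    · exact (ihb h).trans Set.subset_union_right

lemma ground_of_mem_subterms {s t : Term} (h : s ∈ t.subterms) (ht : t.ground) : s.ground :=
  Set.subset_eq_empty (tvars_subset_of_mem_subterms h) ht

end Term

namespace Subst

lemma app_of_ground (σ : Subst) {t : Term} (h : t.ground) : σ.app t = t := by
  induction t <;> simp_all [app, Term.ground, Term.tvars]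

lemma tvars_app (σ : Subst) (t : Term) : (σ.app t).tvars = ⋃ y ∈ t.tvars, (σ y).tvars := by
  induction t with
  | name => simp [app, Term.tvars]
  | var => simp [app, Term.tvars]
  | pair a b iha ihb | enc a b iha ihb =>
    simp only [app, Term.tvars, iha, ihb, Set.biUnion_union]

lemma mem_tvars_app_of_fixed {σ : Subst} {t : Term} {y : ℕ} (hy : y ∈ t.tvars)
    (hσ : σ y = Term.var y) : y ∈ (σ.app t).tvars := by
  rw [tvars_app]
  exact Set.mem_biUnion hy (by simp [hσ, Term.tvars])

lemma app_app_of_forall {lam μ : Subst} (h : ∀ x, lam.app (μ x) = lam x) (t : Term) :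
    lam.app (μ.app t) = lam.app t := by
  induction t <;> simp_all [app]

lemma app_app_self {lam : Subst} (h : ∀ x ∈ lam.dom, (lam x).ground) (t : Term) :
    lam.app (lam.app t) = lam.app t := by
  refine app_app_of_forall (fun x => ?_) t
  by_cases hx : lam x = Term.var x
  · rw [hx]; exact hx
  · exact lam.app_of_ground (h x hx)

lemma mem_subterms_app {lam : Subst} (h : ∀ x ∈ lam.dom, (lam x).ground) {a : Term} :
    ∀ {c : Term}, a ∈ (lam.app c).subterms → a.ground ∨ ∃ c' ∈ c.subterms, a = lam.app c'
  | Term.name _, ha => Or.inr ⟨_, Term.mem_subterms_self _, by simpa [app, Term.subterms] using ha⟩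
  | Term.var x, ha => by
    by_cases hx : lam x = Term.var x
    · refine Or.inr ⟨_, Term.mem_subterms_self _, ?_⟩
      simpa [app, hx, Term.subterms] using ha
    · exact Or.inl (Term.ground_of_mem_subterms ha (h x hx))
  | Term.pair c₀ c₁, ha | Term.enc c₀ c₁, ha => by
    simp only [app, Term.subterms, Set.mem_insert_iff, Set.mem_union] at ha
    rcases ha with rfl | ha | ha
    · exact Or.inr ⟨_, Term.mem_subterms_self _, rfl⟩
    · refine (mem_subterms_app h ha).imp_right fun ⟨c', hc', hac'⟩ => ⟨c', ?_, hac'⟩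
      simp [Term.subterms, hc']
    · refine (mem_subterms_app h ha).imp_right fun ⟨c', hc', hac'⟩ => ⟨c', ?_, hac'⟩
      simp [Term.subterms, hc']

end Subst

lemma dy.tvars_subset {inv : Term → Term} {X : Set Term} {t : Term} (h : dy inv X t) :
    t.tvars ⊆ sVars X := by
  induction h with
  | ax ht => exact Set.subset_biUnion_of_mem ht
  | pair _ _ iha ihb | enc _ _ iha ihb => exact Set.union_subset iha ihb
  | fst _ ih | dec _ _ ih _ => exact Set.subset_union_left.trans ih
  | snd _ ih => exact Set.subset_union_right.trans ih

lemma eqdrv.tvars_subset {inv : Term → Term} {T : Set Term} {E : Set (Term × Term)}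
    {V : Set ℕ} (hT : sVars T ⊆ V) (hE : ∀ e ∈ E, e.1.tvars ∪ e.2.tvars ⊆ V) {t u : Term}
    (h : eqdrv inv T E t u) : t.tvars ∪ u.tvars ⊆ V := by
  induction h with
  | ax he => exact hE _ he
  | eq hd => exact Set.union_subset (hd.tvars_subset.trans hT) (hd.tvars_subset.trans hT)
  | sym _ ih => rwa [Set.union_comm]
  | trans _ _ ih₁ ih₂ =>
    exact Set.union_subset (Set.subset_union_left.trans ih₁) (Set.subset_union_right.trans ih₂)
  | consPair _ _ ih₁ ih₂ | consEnc _ _ ih₁ ih₂ =>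
    simp only [Term.tvars, Set.union_subset_iff] at ih₁ ih₂ ⊢
    tauto
  | projPairFst _ _ _ _ _ ih | projPairSnd _ _ _ _ _ ih
  | projEncFst _ _ _ _ _ ih | projEncSnd _ _ _ _ _ ih =>
    simp only [Term.tvars, Set.union_subset_iff] at ih ⊢
    tauto

lemma eqdrv.app_eq {inv : Term → Term} {T : Set Term} {E : Set (Term × Term)}
    {lam : Subst} (hE : ∀ e ∈ E, lam.app e.1 = lam.app e.2) {t u : Term}
    (h : eqdrv inv T E t u) : lam.app t = lam.app u := by
  induction h with
  | ax he => exact hE _ he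
  | eq _ => rfl
  | sym _ ih => exact ih.symm
  | trans _ _ ih₁ ih₂ => exact ih₁.trans ih₂
  | consPair _ _ ih₁ ih₂ | consEnc _ _ ih₁ ih₂ => simp [Subst.app, ih₁, ih₂]
  | projPairFst _ _ _ _ _ ih | projPairSnd _ _ _ _ _ ih =>
    simp only [Subst.app, Term.pair.injEq] at ih; tauto
  | projEncFst _ _ _ _ _ ih | projEncSnd _ _ _ _ _ ih =>
    simp only [Subst.app, Term.enc.injEq] at ih; tauto

lemma List.IsChain.apply_head_eq_apply_last {α β γ : Type*} {L R : α → β} (g : β → γ) :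
    ∀ {ps : List α}, ps.IsChain (fun p q => R p = L q) → (∀ p ∈ ps, g (L p) = g (R p)) →
      ∀ {t u : β}, ps.head?.map L = some t → ps.getLast?.map R = some u → g t = g u
  | [], _, _, _, _, ht, _ => by simp at ht
  | [p], _, h, _, _, ht, hu => by
    simp only [List.head?_cons, List.getLast?_singleton, Option.map_some,
      Option.some.injEq] at ht hu
    rw [← ht, ← hu]; exact h p (by simp)
  | p :: q :: ps, hc, h, _, _, ht, hu => by
    simp only [List.head?_cons, Option.map_some, Option.some.injEq] at ht
    rw [List.getLast?_cons_cons] at hu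
    obtain ⟨hpq, hc⟩ := List.isChain_cons_cons.mp hc
    rw [← ht, h p (by simp), hpq]
    exact hc.apply_head_eq_apply_last g (fun r hr => h r (by simp [hr])) (by simp) hu

namespace EPT

lemma sizeOf_lt_of_sub {p q : EPT} (h : Sub p q) : sizeOf p < sizeOf q := by
  cases h
  case trans hp => have := List.sizeOf_lt_of_mem hp; simp; omega
  all_goals simp +arith

lemma wellFounded_sub : WellFounded Sub :=
  Subrelation.wf sizeOf_lt_of_sub (measure sizeOf).wf

lemma valid_of_subproof {inv : Term → Term} {T : Set Term} {E : Set (Term × Term)}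
    {p q : EPT} (h : Subproof p q) (hq : valid inv T E q) : valid inv T E p :=
  fun r hr => hq r (hr.trans h)

lemma normalP_of_subproof {p q : EPT} (h : Subproof p q) (hq : normalP q) : normalP p :=
  fun r hr => hq r (hr.trans h)

lemma not_containsCons_of_subproof {p q : EPT} (h : Subproof p q) (hq : ¬ containsCons q) :
    ¬ containsCons p :=
  fun ⟨r, hr, hrc⟩ => hq ⟨r, hr.trans h, hrc⟩

end EPT

namespace RunSetting

variable (R : RunSetting)

def safeVars : Set ℕ := R.Vq ∪ R.σ.dom

def TypedEq (t u : Term) : Prop :=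
  R.ω.app t = R.ω.app u ∧ (t = u ∨ t ∈ R.typedSet ∧ u ∈ R.typedSet)

def Component (a : Term) : Prop :=
  a.ground ∨ ∃ lam ∈ ({R.σ, R.ω} : Set Subst), ∃ c ∈ R.C, a = lam.app c

variable {R}

lemma ω_app_σ_app (t : Term) : R.ω.app (R.σ.app t) = R.ω.app t :=
  Subst.app_app_of_forall R.hωσ t

lemma ω_app_ω_app (t : Term) : R.ω.app (R.ω.app t) = R.ω.app t :=
  Subst.app_app_self R.hωground t

lemma σ_eq_ω_of_mem_dom {x : ℕ} (hx : x ∈ R.σ.dom) : R.σ x = R.ω x := by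
  rw [← R.hωσ x, Subst.app_of_ground _ (R.hσground x hx)]

lemma ground_of_mem_dom {lam : Subst} (hlam : lam ∈ ({R.σ, R.ω} : Set Subst)) :
    ∀ x ∈ lam.dom, (lam x).ground := by
  rcases hlam with rfl | rfl
  exacts [R.hσground, R.hωground]

lemma tvars_σ_app_subset {t : Term} (ht : t.tvars ⊆ R.safeVars) : (R.σ.app t).tvars ⊆ R.Vq := by
  rw [Subst.tvars_app]
  refine Set.iUnion₂_subset fun y hy => ?_
  rcases ht hy with h | h
  · simp [R.hσVq y h, Term.tvars, h]
  · rw [show (R.σ y).tvars = ∅ from R.hσground y h]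
    exact Set.empty_subset _

lemma sVars_σ_image_subset {X : Set Term} (hX : ∀ t ∈ X, t.tvars ⊆ R.safeVars) :
    sVars (R.σ.app '' X) ⊆ R.Vq :=
  Set.iUnion₂_subset fun _ ⟨t, ht, hts⟩ => hts ▸ tvars_σ_app_subset (hX t ht)

lemma tvars_pairImg_subset {E : Set (Term × Term)}
    (hE : ∀ e ∈ E, e.1.tvars ∪ e.2.tvars ⊆ R.safeVars) :
    ∀ e ∈ pairImg R.σ E, e.1.tvars ∪ e.2.tvars ⊆ R.Vq := by
  rintro _ ⟨e, he, rfl⟩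
  exact Set.union_subset (tvars_σ_app_subset (Set.subset_union_left.trans (hE e he)))
    (tvars_σ_app_subset (Set.subset_union_right.trans (hE e he)))

/-- A variable outside `safeVars` survives `σ ∘ lam`, so it would show up outside `Vq` in an
equality derived from `σ`-images of safe knowledge. -/
lemma tvars_subset_safeVars_of_eqdrv {lam : Subst} (hlam : lam.dom ⊆ R.Vq) {X : Set Term}
    {E : Set (Term × Term)} (hX : ∀ t ∈ X, t.tvars ⊆ R.safeVars)
    (hE : ∀ e ∈ E, e.1.tvars ∪ e.2.tvars ⊆ R.safeVars) {l r : Term}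
    (h : eqdrv R.inv (R.σ.app '' X) (pairImg R.σ E) (R.σ.app (lam.app l)) (R.σ.app (lam.app r))) :
    l.tvars ∪ r.tvars ⊆ R.safeVars := by
  intro x hx
  by_contra hW
  have hlx : lam x = Term.var x := by_contra fun h => hW (Or.inl (hlam h))
  have hσx : R.σ x = Term.var x := by_contra fun h => hW (Or.inr h)
  have hsurv : ∀ {t}, x ∈ t.tvars → x ∈ (R.σ.app (lam.app t)).tvars := fun ht =>
    Subst.mem_tvars_app_of_fixed (Subst.mem_tvars_app_of_fixed ht hlx) hσx
  have hV := h.tvars_subset (sVars_σ_image_subset hX) (tvars_pairImg_subset hE)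
  exact hW (Or.inl (hV (hx.imp hsurv hsurv)))

lemma tvars_α_subset_safeVars {i : ℕ} (h1 : 1 ≤ i) (hi : i ≤ R.n)
    (hβ : ∀ k, 1 ≤ k → k ≤ i → (R.β k).l.tvars ∪ (R.β k).r.tvars ⊆ R.safeVars) :
    (R.α i).l.tvars ∪ (R.α i).r.tvars ⊆ R.safeVars := by
  intro x hx
  by_cases hb : x ∈ (R.α i).bvSet
  · exact Or.inl (R.hαbv i h1 hi hb)
  · obtain ⟨k, hk1, hki, hxk⟩ := R.hfvEarlier i h1 hi x ⟨hx, hb⟩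
    exact hβ k hk1 hki hxk.1

lemma tvars_run_subset_safeVars {j : ℕ} (hj : j ≤ R.n) :
    (∀ t ∈ R.T j, t.tvars ⊆ R.safeVars) ∧
    (∀ e ∈ R.E j, e.1.tvars ∪ e.2.tvars ⊆ R.safeVars) ∧
    ∀ k, 1 ≤ k → k ≤ j → (R.β k).l.tvars ∪ (R.β k).r.tvars ⊆ R.safeVars := by
  induction j with
  | zero =>
    refine ⟨fun t ht => ?_, by simp [R.hE0], fun k hk hk0 => by omega⟩
    simp [show t.tvars = ∅ from R.hT0 t ht]
  | succ j ih =>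
    obtain ⟨hT, hE, hβ⟩ := ih (by omega)
    have hβj := tvars_subset_safeVars_of_eqdrv
      ((R.hμdom _ (by omega) hj).trans (R.hβbv _ (by omega) hj)) hT hE
      (by simpa using R.hμeq (j + 1) (by omega) hj)
    have hβ' : ∀ k, 1 ≤ k → k ≤ j + 1 → (R.β k).l.tvars ∪ (R.β k).r.tvars ⊆ R.safeVars :=
      fun k hk1 hk => (Nat.le_succ_iff.mp hk).elim (hβ k hk1) (· ▸ hβj)
    have hα := tvars_α_subset_safeVars (by omega) hj hβ'
    refine ⟨?_, ?_, hβ'⟩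
    · rw [R.hTstep _ (by omega) hj, Nat.add_sub_cancel]
      rintro t ((ht | ⟨ht, -⟩) | ⟨x, hx, rfl⟩)
      · exact hT t ht
      · rcases ht with ht | ht
        · exact (Term.tvars_subset_of_mem_subterms ht).trans (Set.subset_union_left.trans hα)
        · exact (Term.tvars_subset_of_mem_subterms ht).trans (Set.subset_union_right.trans hα)
      · simpa [Term.tvars, safeVars] using Or.inl (R.hαbv _ (by omega) hj hx)
    · rw [R.hEstep _ (by omega) hj, Nat.add_sub_cancel]
      rintro e (he | rfl)
      exacts [hE e he, hα]

lemma sVars_σ_T_subset {i : ℕ} (hi : i ≤ R.n) : sVars (R.σ.app '' R.T i) ⊆ R.Vq :=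
  sVars_σ_image_subset (tvars_run_subset_safeVars hi).1

lemma ω_app_eq_of_eqdrv {lam : Subst} (hlam : ∀ x, R.ω.app (lam x) = R.ω x) {X : Set Term}
    {E : Set (Term × Term)} (hE : ∀ e ∈ E, R.ω.app e.1 = R.ω.app e.2) {l r : Term}
    (h : eqdrv R.inv X (pairImg R.σ E) (R.σ.app (lam.app l)) (R.σ.app (lam.app r))) :
    R.ω.app l = R.ω.app r := by
  have := h.app_eq (lam := R.ω) <| by
    rintro _ ⟨e, he, rfl⟩
    simpa only [ω_app_σ_app] using hE e he
  simpa only [ω_app_σ_app, Subst.app_app_of_forall hlam] using this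

lemma ω_unifies_run {j : ℕ} (hj : j ≤ R.n) :
    (∀ e ∈ R.E j, R.ω.app e.1 = R.ω.app e.2) ∧
    ∀ k, 1 ≤ k → k ≤ j → R.ω.app (R.β k).l = R.ω.app (R.β k).r := by
  induction j with
  | zero => exact ⟨by simp [R.hE0], fun k hk hk0 => by omega⟩
  | succ j ih =>
    obtain ⟨hE, hβ⟩ := ih (by omega)
    have hβj := ω_app_eq_of_eqdrv (R.hωμ _ (by omega) hj) hE
      (by simpa using R.hμeq (j + 1) (by omega) hj)
    have hβ' : ∀ k, 1 ≤ k → k ≤ j + 1 → R.ω.app (R.β k).l = R.ω.app (R.β k).r :=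
      fun k hk1 hk => (Nat.le_succ_iff.mp hk).elim (hβ k hk1) (· ▸ hβj)
    have hα := ω_app_eq_of_eqdrv (R.hωθ _ (by omega) hj) (X := R.σ.app '' R.U (j + 1))
      (fun e he => by
        obtain ⟨k, hk1, hk, rfl⟩ := R.hFmem _ (by omega) hj e he
        exact hβ' k hk1 hk)
      (R.hθeq (j + 1) (by omega) hj)
    refine ⟨?_, hβ'⟩
    rw [R.hEstep _ (by omega) hj, Nat.add_sub_cancel]
    rintro e (he | rfl)
    exacts [hE e he, hα]

lemma mem_C_of_mem_subterms {c s : Term} (hc : c ∈ R.C) (hs : s ∈ c.subterms) : s ∈ R.C := by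
  simp only [C, sSubterms, pairSubterms, Set.mem_iUnion, Set.mem_union] at hc ⊢
  obtain ⟨j, hj, ⟨t, ht, hct⟩ | ⟨e, he, hce | hce⟩⟩ := hc
  · exact ⟨j, hj, Or.inl ⟨t, ht, Term.subterms_subset_of_mem hct hs⟩⟩
  · exact ⟨j, hj, Or.inr ⟨e, he, Or.inl (Term.subterms_subset_of_mem hce hs)⟩⟩
  · exact ⟨j, hj, Or.inr ⟨e, he, Or.inr (Term.subterms_subset_of_mem hce hs)⟩⟩

lemma mem_C_of_mem_E {j : ℕ} (hj : j ≤ R.n) {e : Term × Term} (he : e ∈ R.E j) :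
    e.1 ∈ R.C ∧ e.2 ∈ R.C := by
  simp only [C, pairSubterms, Set.mem_iUnion, Set.mem_union]
  exact ⟨⟨j, hj, Or.inr ⟨e, Or.inl he, Or.inl (Term.mem_subterms_self _)⟩⟩,
    ⟨j, hj, Or.inr ⟨e, Or.inl he, Or.inr (Term.mem_subterms_self _)⟩⟩⟩

lemma ω_app_mem_typedSet {c : Term} (hc : c ∈ R.C) : R.ω.app c ∈ R.typedSet :=
  Or.inl (Or.inr ⟨c, hc, rfl⟩)

lemma app_mem_typedSet {lam : Subst} (hlam : lam ∈ ({R.σ, R.ω} : Set Subst)) {c : Term}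
    (hc : c ∈ R.C) (hv : (lam.app c).tvars ⊆ R.Vq) :
    lam.app c ∈ R.typedSet ∧ R.ω.app (lam.app c) = R.ω.app c := by
  rcases hlam with rfl | rfl
  · refine ⟨?_, ω_app_σ_app c⟩
    cases c with
    | var x =>
      by_cases hx : R.σ x = Term.var x
      · refine Or.inr ⟨x, hv ?_, hx.symm⟩
        simp [Subst.app, hx, Term.tvars]
      · show R.σ x ∈ _
        exact (σ_eq_ω_of_mem_dom hx) ▸ ω_app_mem_typedSet hc
    | _ => exact Or.inl (Or.inl ⟨_, ⟨hc, by simp⟩, rfl⟩)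
  · exact ⟨ω_app_mem_typedSet hc, ω_app_ω_app c⟩

lemma typedEq_of_mem_E {i : ℕ} (hi : i ≤ R.n) {t u : Term} (h : (t, u) ∈ pairImg R.σ (R.E i)) :
    R.TypedEq t u := by
  obtain ⟨e, he, he'⟩ := h
  obtain ⟨rfl, rfl⟩ := Prod.mk.inj he'
  have hC := mem_C_of_mem_E hi he
  have hW := (tvars_run_subset_safeVars hi).2.1 e he
  refine ⟨by simpa only [ω_app_σ_app] using (ω_unifies_run hi).1 e he, Or.inr ⟨?_, ?_⟩⟩
  · exact (app_mem_typedSet (by simp) hC.1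
      (tvars_σ_app_subset (Set.subset_union_left.trans hW))).1
  · exact (app_mem_typedSet (by simp) hC.2
      (tvars_σ_app_subset (Set.subset_union_right.trans hW))).1

lemma component_of_mem_typedSet {s : Term} (hs : s ∈ R.typedSet) (hv : ∀ x, s ≠ Term.var x) :
    R.Component s := by
  rcases hs with (⟨d, hd, rfl⟩ | ⟨c, hc, rfl⟩) | ⟨x, -, rfl⟩
  · exact Or.inr ⟨R.σ, by simp, d, hd.1, rfl⟩
  · exact Or.inr ⟨R.ω, by simp, c, hc, rfl⟩
  · exact absurd rfl (hv x)

lemma Component.of_mem_subterms {s a : Term} (h : R.Component s) (ha : a ∈ s.subterms) :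
    R.Component a := by
  rcases h with hg | ⟨lam, hlam, c, hc, rfl⟩
  · exact Or.inl (Term.ground_of_mem_subterms ha hg)
  · rcases Subst.mem_subterms_app (ground_of_mem_dom hlam) ha with hg | ⟨c', hc', rfl⟩
    · exact Or.inl hg
    · exact Or.inr ⟨lam, hlam, c', mem_C_of_mem_subterms hc hc', rfl⟩

lemma Component.ground_or_typed {a : Term} (h : R.Component a) (hv : a.tvars ⊆ R.Vq) :
    a.ground ∨ a ∈ R.typedSet ∧ ∃ c ∈ R.C, R.ω.app a = R.ω.app c := by
  rcases h with hg | ⟨lam, hlam, c, hc, rfl⟩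
  · exact Or.inl hg
  · obtain ⟨ht, hω⟩ := app_mem_typedSet hlam hc hv
    exact Or.inr ⟨ht, c, hc, hω⟩

/-- A ground side equals the `ω`-image of the other side, which is an `ω`-image of a term
of `𝒞`. -/
lemma typedEq_of_components {a b : Term} (ha : R.Component a) (hb : R.Component b)
    (hav : a.tvars ⊆ R.Vq) (hbv : b.tvars ⊆ R.Vq) (hω : R.ω.app a = R.ω.app b) :
    R.TypedEq a b := by
  refine ⟨hω, ?_⟩
  rcases ha.ground_or_typed hav with ha | ⟨ha, ca, hca, hωa⟩ <;>
    rcases hb.ground_or_typed hbv with hb | ⟨hb, cb, hcb, hωb⟩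
  · left
    rw [← R.ω.app_of_ground ha, hω, R.ω.app_of_ground hb]
  · refine Or.inr ⟨?_, hb⟩
    rw [← R.ω.app_of_ground ha, hω, hωb]
    exact ω_app_mem_typedSet hcb
  · refine Or.inr ⟨ha, ?_⟩
    rw [← R.ω.app_of_ground hb, ← hω, hωa]
    exact ω_app_mem_typedSet hca
  · exact Or.inr ⟨ha, hb⟩

lemma TypedEq.symm {t u : Term} (h : R.TypedEq t u) : R.TypedEq u t :=
  ⟨h.1.symm, h.2.imp Eq.symm And.symm⟩

lemma TypedEq.pair_args {t₀ t₁ u₀ u₁ : Term} (h : R.TypedEq (.pair t₀ t₁) (.pair u₀ u₁))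
    (ht : (Term.pair t₀ t₁).tvars ⊆ R.Vq) (hu : (Term.pair u₀ u₁).tvars ⊆ R.Vq) :
    R.TypedEq t₀ u₀ ∧ R.TypedEq t₁ u₁ := by
  obtain ⟨hω, heq | ⟨hs, hs'⟩⟩ := h <;> simp only [Subst.app, Term.pair.injEq] at hω
  · obtain ⟨rfl, rfl⟩ := Term.pair.inj heq
    exact ⟨⟨hω.1, Or.inl rfl⟩, ⟨hω.2, Or.inl rfl⟩⟩
  have hc := component_of_mem_typedSet hs (by simp)
  have hc' := component_of_mem_typedSet hs' (by simp)
  have hargs : ∀ {a b : Term}, a ∈ (Term.pair a b).subterms ∧ b ∈ (Term.pair a b).subterms := by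
    simp [Term.subterms]
  simp only [Term.tvars, Set.union_subset_iff] at ht hu
  exact ⟨typedEq_of_components (hc.of_mem_subterms hargs.1) (hc'.of_mem_subterms hargs.1)
      ht.1 hu.1 hω.1,
    typedEq_of_components (hc.of_mem_subterms hargs.2) (hc'.of_mem_subterms hargs.2)
      ht.2 hu.2 hω.2⟩

lemma TypedEq.enc_args {t₀ t₁ u₀ u₁ : Term} (h : R.TypedEq (.enc t₀ t₁) (.enc u₀ u₁))
    (ht : (Term.enc t₀ t₁).tvars ⊆ R.Vq) (hu : (Term.enc u₀ u₁).tvars ⊆ R.Vq) :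
    R.TypedEq t₀ u₀ ∧ R.TypedEq t₁ u₁ := by
  obtain ⟨hω, heq | ⟨hs, hs'⟩⟩ := h <;> simp only [Subst.app, Term.enc.injEq] at hω
  · obtain ⟨rfl, rfl⟩ := Term.enc.inj heq
    exact ⟨⟨hω.1, Or.inl rfl⟩, ⟨hω.2, Or.inl rfl⟩⟩
  have hc := component_of_mem_typedSet hs (by simp)
  have hc' := component_of_mem_typedSet hs' (by simp)
  have hargs : ∀ {a b : Term}, a ∈ (Term.enc a b).subterms ∧ b ∈ (Term.enc a b).subterms := by
    simp [Term.subterms]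
  simp only [Term.tvars, Set.union_subset_iff] at ht hu
  exact ⟨typedEq_of_components (hc.of_mem_subterms hargs.1) (hc'.of_mem_subterms hargs.1)
      ht.1 hu.1 hω.1,
    typedEq_of_components (hc.of_mem_subterms hargs.2) (hc'.of_mem_subterms hargs.2)
      ht.2 hu.2 hω.2⟩

lemma typedEq_of_isChain {ps : List EPT} (hchain : ps.IsChain fun p q => p.concl.2 = q.concl.1)
    (hps : ∀ p ∈ ps, R.TypedEq p.concl.1 p.concl.2 ∧ p.concl.1 ≠ p.concl.2) {t u : Term}
    (ht : ps.head?.map (fun p => p.concl.1) = some t)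
    (hu : ps.getLast?.map (fun p => p.concl.2) = some u) : R.TypedEq t u := by
  have htyped : ∀ p ∈ ps, p.concl.1 ∈ R.typedSet ∧ p.concl.2 ∈ R.typedSet := fun p hp =>
    (hps p hp).1.2.resolve_left (hps p hp).2
  refine ⟨hchain.apply_head_eq_apply_last R.ω.app (fun p hp => (hps p hp).1.1) ht hu,
    Or.inr ⟨?_, ?_⟩⟩
  · obtain ⟨p, hp, rfl⟩ := Option.map_eq_some_iff.mp ht
    exact (htyped p (List.mem_of_mem_head? hp)).1
  · obtain ⟨p, hp, rfl⟩ := Option.map_eq_some_iff.mp hu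
    exact (htyped p (List.mem_of_mem_getLast? hp)).2

theorem typedEq_of_not_containsCons {i : ℕ} (hi : i ≤ R.n) (π : EPT)
    (hv : π.valid R.inv (R.σ.app '' R.T i) (pairImg R.σ (R.E i))) (hn : π.normalP)
    (hc : ¬ π.containsCons) : R.TypedEq π.concl.1 π.concl.2 := by
  induction π using EPT.wellFounded_sub.induction with
  | _ π IH =>
  have ih : ∀ p, EPT.Sub p π → ¬ p.containsCons → R.TypedEq p.concl.1 p.concl.2 :=
    fun p hp => IH p hp (EPT.valid_of_subproof (.single hp) hv)
      (EPT.normalP_of_subproof (.single hp) hn)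
  have ih' : ∀ p, EPT.Sub p π → R.TypedEq p.concl.1 p.concl.2 := fun p hp =>
    ih p hp (EPT.not_containsCons_of_subproof (.single hp) hc)
  have hdy : ∀ {t}, dy R.inv (R.σ.app '' R.T i) t → t.tvars ⊆ R.Vq := fun h =>
    h.tvars_subset.trans (sVars_σ_T_subset hi)
  have hl := hv π .refl
  have hln := hn π .refl
  cases π with
  | ax t u => exact typedEq_of_mem_E hi hl
  | eq t d => exact ⟨rfl, Or.inl rfl⟩
  | sym t u p =>
    have := (ih' p .sym).symm
    rwa [show p.concl = (u, t) from hl] at this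
  | trans t u ps =>
    exact typedEq_of_isChain hl.2.2.2
      (fun p hp => ⟨ih' p (.trans hp), (hln.1 p hp).2⟩) hl.2.1 hl.2.2.1
  | consPair | consEnc => exact absurd ⟨_, .refl, trivial⟩ hc
  | projPairFst t₀ t₁ u₀ u₁ p | projPairSnd t₀ t₁ u₀ u₁ p =>
    obtain ⟨hp, ht₀, ht₁, hu₀, hu₁⟩ := hl
    have := (hp ▸ ih p (by constructor) hln).pair_args (hdy (dy.pair ht₀ ht₁))
      (hdy (dy.pair hu₀ hu₁))
    first | exact this.1 | exact this.2
  | projEncFst t₀ t₁ u₀ u₁ p | projEncSnd t₀ t₁ u₀ u₁ p =>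
    obtain ⟨hp, ht₀, ht₁, hu₀, hu₁⟩ := hl
    have := (hp ▸ ih p (by constructor) hln).enc_args (hdy (dy.enc ht₀ ht₁))
      (hdy (dy.enc hu₀ hu₁))
    first | exact this.1 | exact this.2

end RunSetting

/-- Theorem (rustur-eq): normal ⊢eq proofs are typed. -/
theorem stmt14 (R : RunSetting) (i : ℕ) (hi : i ≤ R.n) (π : EPT)
    (hv : EPT.valid R.inv (Subst.app R.σ '' R.T i) (pairImg R.σ (R.E i)) π)
    (hn : EPT.normalP π) :
    EPT.typedP R.typedSet π := by
  intro π' hsub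
  by_cases hcc : π'.containsCons
  · exact Or.inl hcc
  · exact Or.inr (RunSetting.typedEq_of_not_containsCons hi π' (EPT.valid_of_subproof hsub hv)
      (EPT.normalP_of_subproof hsub hn) hcc).2
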